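/- arXiv:2001.03916 — 5 statements merged into one kernel-verified Lean document; each statement's English description precedes it below -/
import Mathlib

section
/- Let A be a finite abelian group and B a subgroup of index 2. The number of subsets S of A \ B with ⟨S⟩ a proper subgroup of A is at most 2^(|A|/4 + log₂|A|). -/
/-!
Every `S` with `⟨S⟩ ≠ A` lies in a maximal subgroup `M`, hence in `M \ B`. Since `B` has index 2,
`M \ B` is empty or a coset of `M ∩ B` in `M`, so `|M \ B| ≤ |M| / 2 ≤ |A| / 4`. The maximal
subgroups of a finite abelian group are kernels of characters `A →* ℂˣ`, of which there are `|A|`,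
so there are at most `|A| · 2 ^ (|A| / 4)` such `S`.
-/

open Subgroup

theorem Subgroup.two_mul_ncard_diff_le_card {G : Type*} [Group G] [Finite G] {B : Subgroup G}
    (hB : B.index = 2) (H : Subgroup G) : 2 * ((H : Set G) \ B).ncard ≤ Nat.card H := by
  rcases ((H : Set G) \ B).eq_empty_or_nonempty with hempty | ⟨h, hhH, hhB⟩
  · simp [hempty]
  -- left multiplication by an element of `H \ B` maps `H \ B` into `H ∩ B`
  have hle : ((H : Set G) \ B).ncard ≤ ((H : Set G) ∩ B).ncard :=
    Set.ncard_le_ncard_of_injOn (h * ·)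
      (fun x hx => ⟨H.mul_mem hhH hx.1, (mul_mem_iff_of_index_two hB).2 (iff_of_false hhB hx.2)⟩)
      (mul_right_injective h).injOn
  have hsplit := Set.ncard_inter_add_ncard_sdiff_eq_ncard (H : Set G) B
  have hcard : Nat.card H = (H : Set G).ncard := Nat.card_coe_set_eq _
  omega

theorem Subgroup.two_mul_card_le_of_ne_top {G : Type*} [Group G] [Finite G] {H : Subgroup G}
    (hH : H ≠ ⊤) : 2 * Nat.card H ≤ Nat.card G := by
  rw [← H.card_mul_index, mul_comm]
  exact Nat.mul_le_mul_left _ (one_lt_index_of_ne_top hH)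

theorem Subgroup.exists_monoidHom_ker_eq_of_isCoatom {A : Type*} [CommGroup A] [Finite A]
    {M : Subgroup A} (hM : IsCoatom M) : ∃ φ : A →* ℂˣ, φ.ker = M := by
  have : Nontrivial (A ⧸ M) := QuotientGroup.nontrivial_iff.mpr hM.1
  obtain ⟨a, ha⟩ := exists_ne (1 : A ⧸ M)
  have : NeZero (Monoid.exponent (A ⧸ M) : ℂ) :=
    ⟨Nat.cast_ne_zero.mpr Monoid.exponent_ne_zero_of_finite⟩
  obtain ⟨ψ, hψ⟩ := CommGroup.exists_apply_ne_one_of_hasEnoughRootsOfUnity (A ⧸ M) ℂ ha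
  refine ⟨ψ.comp (QuotientGroup.mk' M), (hM.le_iff.mp ?_).resolve_left ?_⟩
  · intro m hm
    simp [(QuotientGroup.eq_one_iff m).mpr hm]
  · intro htop
    obtain ⟨x, rfl⟩ := QuotientGroup.mk'_surjective M a
    exact hψ (htop ▸ mem_top x : x ∈ (ψ.comp (QuotientGroup.mk' M)).ker)

theorem Subgroup.ncard_setOf_isCoatom_le_card (A : Type*) [CommGroup A] [Finite A] :
    {M : Subgroup A | IsCoatom M}.ncard ≤ Nat.card A := by
  have : NeZero (Monoid.exponent A : ℂ) :=
    ⟨Nat.cast_ne_zero.mpr Monoid.exponent_ne_zero_of_finite⟩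
  have : Finite (A →* ℂˣ) := Nat.finite_of_card_ne_zero (by
    rw [CommGroup.card_monoidHom_of_hasEnoughRootsOfUnity]; exact Nat.card_pos.ne')
  calc {M : Subgroup A | IsCoatom M}.ncard ≤ (Set.range fun φ : A →* ℂˣ => φ.ker).ncard :=
        Set.ncard_le_ncard (fun M hM => exists_monoidHom_ker_eq_of_isCoatom hM) (Set.toFinite _)
    _ ≤ Nat.card (A →* ℂˣ) := Finite.card_range_le _
    _ = Nat.card A := CommGroup.card_monoidHom_of_hasEnoughRootsOfUnity A ℂ

theorem Set.ncard_setOf_exists_subset_le {α ι : Type*} [Finite α] (I : Set ι) (hI : I.Finite)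
    (T : ι → Set α) {k : ℕ} (hk : ∀ i ∈ I, (T i).ncard ≤ k) :
    {S : Set α | ∃ i ∈ I, S ⊆ T i}.ncard ≤ I.ncard * 2 ^ k := by
  have hunion : {S : Set α | ∃ i ∈ I, S ⊆ T i} = ⋃ i ∈ hI.toFinset, 𝒫 T i := by
    ext S; simp
  rw [hunion, Set.ncard_eq_toFinset_card I hI]
  refine (hI.toFinset.set_ncard_biUnion_le _).trans (Finset.sum_le_card_nsmul _ _ _ fun i hi => ?_)
  rw [Set.ncard_powerset _ (Set.toFinite _)]
  exact Nat.pow_le_pow_right two_pos (hk i (by simpa using hi))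

/-- Let `A` be a finite abelian group and `B` a subgroup of index 2. The number of subsets
`S` of `A \ B` with `⟨S⟩` a proper subgroup of `A` is at most `2 ^ (|A|/4 + log₂ |A|)`. -/
theorem stmt_5 (A : Type*) [CommGroup A] [Finite A] (B : Subgroup A) (hB : B.index = 2) :
    (Nat.card {S : Set A | S ⊆ (B : Set A)ᶜ ∧ Subgroup.closure S ≠ ⊤} : ℝ) ≤
      (2 : ℝ) ^ ((Nat.card A : ℝ) / 4 + Real.logb 2 (Nat.card A)) := by
  set n := Nat.card A
  have hcover : {S : Set A | S ⊆ (B : Set A)ᶜ ∧ closure S ≠ ⊤} ⊆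
      {S | ∃ M ∈ {M : Subgroup A | IsCoatom M}, S ⊆ (M : Set A) \ B} := by
    rintro S ⟨hSB, hS⟩
    obtain ⟨M, hM, hle⟩ := (eq_top_or_exists_le_coatom (closure S)).resolve_left hS
    exact ⟨M, hM, fun x hx => ⟨hle (subset_closure hx), hSB hx⟩⟩
  have hsmall : ∀ M ∈ {M : Subgroup A | IsCoatom M}, ((M : Set A) \ B).ncard ≤ n / 4 := by
    intro M hM
    have := two_mul_ncard_diff_le_card hB M
    have := two_mul_card_le_of_ne_top hM.1
    omega
  have hcount : Nat.card {S : Set A | S ⊆ (B : Set A)ᶜ ∧ closure S ≠ ⊤} ≤ n * 2 ^ (n / 4) :=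
    calc _ ≤ _ := (Nat.card_coe_set_eq _).trans_le (Set.ncard_le_ncard hcover (Set.toFinite _))
      _ ≤ _ := Set.ncard_setOf_exists_subset_le _ (Set.toFinite _) _ hsmall
      _ ≤ _ := Nat.mul_le_mul_right _ (ncard_setOf_isCoatom_le_card A)
  have hn : (0 : ℝ) < n := Nat.cast_pos.mpr Nat.card_pos
  rw [Real.rpow_add two_pos, Real.rpow_logb two_pos (by norm_num) hn, mul_comm]
  calc _ ≤ (n : ℝ) * (2 : ℝ) ^ (n / 4 : ℕ) := by exact_mod_cast hcount
    _ ≤ (n : ℝ) * (2 : ℝ) ^ ((n : ℝ) / 4) := by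
      rw [← Real.rpow_natCast]
      gcongr
      · norm_num
      · exact Nat.cast_div_le.trans (by norm_num)
end

section
/- Let A be a finite group, B a subgroup of index 2, and H, K subgroups with 1 < H ≤ K < A and H ≤ B. The number of subsets S of A \ B such that S \ K is a union of right H-cosets is at most 2^(3|A|/8). -/
/-!
Put `X = A \ B`. A set `S` being counted is determined by `S ∩ K ⊆ X ∩ K = K \ B` together
with the set of cosets `sH` that make up `S \ K ⊆ X \ K`, so there are at most `2 ^ (a + c)` of
them, where `a = |K \ B|` and `c` is the number of cosets `sH` in `X \ K` (a union of such
cosets, as `H ≤ B ∩ K`). Left multiplication by any `k ∈ K \ B` embeds `K \ B` into `K ∩ B`,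
so `a ≤ |K| / 2 ≤ |A| / 4`, and `c = |X \ K| / |H| ≤ |X \ K| / 2`. Since
`a + |X \ K| = |X| = |A| / 2`, this gives `a + c ≤ a / 2 + |A| / 4 ≤ 3|A| / 8`.
-/

open Set

namespace QuotientGroup

variable {G : Type*} [Group G]

theorem preimage_image_mk_eq_of_mul_mem (H : Subgroup G) {Q : Set G}
    (hQ : ∀ s ∈ Q, ∀ h ∈ H, s * h ∈ Q) : mk ⁻¹' ((mk : G → G ⧸ H) '' Q) = Q := by
  rw [preimage_image_mk_eq_mul]
  exact (mul_subset_iff.2 hQ).antisymm (subset_mul_left Q H.one_mem)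

theorem ncard_eq_card_mul_ncard_image_mk [Finite G] (H : Subgroup G) {Q : Set G}
    (hQ : ∀ s ∈ Q, ∀ h ∈ H, s * h ∈ Q) :
    Q.ncard = Nat.card H * ((mk : G → G ⧸ H) '' Q).ncard := by
  rw [← Nat.card_coe_set_eq, ← Nat.card_coe_set_eq, ← card_preimage_mk,
    preimage_image_mk_eq_of_mul_mem H hQ]

theorem inter_union_preimage_image_mk_diff (H : Subgroup G) {S : Set G} (K : Set G)
    (hS : ∀ s ∈ S \ K, ∀ h ∈ H, s * h ∈ S) :
    S ∩ K ∪ mk ⁻¹' ((mk : G → G ⧸ H) '' (S \ K)) = S := by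
  rw [preimage_image_mk_eq_mul]
  refine (union_subset inter_subset_left (mul_subset_iff.2 hS)).antisymm fun x hx => ?_
  by_cases hxK : x ∈ K
  · exact Or.inl ⟨hx, hxK⟩
  · exact Or.inr (subset_mul_left _ H.one_mem ⟨hx, hxK⟩)

theorem ncard_setOf_subset_and_mul_mem_le [Finite G] (H : Subgroup G) (X K : Set G) :
    {S : Set G | S ⊆ X ∧ ∀ s ∈ S \ K, ∀ h ∈ H, s * h ∈ S}.ncard ≤
      2 ^ ((X ∩ K).ncard + ((mk : G → G ⧸ H) '' (X \ K)).ncard) := by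
  let code : Set G → Set G × Set (G ⧸ H) := fun S => (S ∩ K, mk '' (S \ K))
  have hmaps : ∀ S ∈ {S : Set G | S ⊆ X ∧ ∀ s ∈ S \ K, ∀ h ∈ H, s * h ∈ S},
      code S ∈ 𝒫 (X ∩ K) ×ˢ 𝒫 ((mk : G → G ⧸ H) '' (X \ K)) := fun S hS =>
    ⟨inter_subset_inter_left K hS.1, image_mono (sdiff_subset_sdiff_left hS.1)⟩
  have hinj : InjOn code {S : Set G | S ⊆ X ∧ ∀ s ∈ S \ K, ∀ h ∈ H, s * h ∈ S} := by
    intro S hS T hT hST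
    rw [← inter_union_preimage_image_mk_diff H K hS.2,
      ← inter_union_preimage_image_mk_diff H K hT.2]
    simp only [code, Prod.mk.injEq] at hST
    rw [hST.1, hST.2]
  refine (ncard_le_ncard_of_injOn code hmaps hinj).trans_eq ?_
  rw [ncard_prod, ncard_powerset, ncard_powerset, pow_add]

end QuotientGroup

namespace Subgroup

variable {G : Type*} [Group G]

theorem ncard_compl_eq_card_of_index_eq_two [Finite G] {B : Subgroup G} (hB : B.index = 2) :
    (B : Set G)ᶜ.ncard = Nat.card B := by
  have hcompl := ncard_add_ncard_compl (B : Set G)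
  have hcard := B.card_mul_index
  rw [hB] at hcard
  rw [← Nat.card_coe_set_eq (B : Set G), SetLike.coe_sort_coe] at hcompl
  omega

theorem ncard_diff_le_ncard_inter_of_index_eq_two [Finite G] {B : Subgroup G}
    (hB : B.index = 2) (K : Subgroup G) :
    ((K : Set G) \ B).ncard ≤ ((K : Set G) ∩ B).ncard := by
  by_cases hKB : (K : Set G) ⊆ B
  · simp [sdiff_eq_empty.2 hKB]
  obtain ⟨k, hkK, hkB⟩ := not_subset.1 hKB
  refine ncard_le_ncard_of_injOn (k * ·) (fun x hx => ⟨K.mul_mem hkK hx.1, ?_⟩)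
    (mul_right_injective k).injOn
  exact (B.mul_mem_iff_of_index_two hB).2 (iff_of_false hkB hx.2)

theorem card_mul_two_le_card_of_ne_top [Finite G] {K : Subgroup G} (hK : K ≠ ⊤) :
    Nat.card K * 2 ≤ Nat.card G :=
  K.card_mul_index ▸ Nat.mul_le_mul_left _ (one_lt_index_of_ne_top hK)

theorem ncard_diff_mul_four_le_card_of_index_eq_two [Finite G] {B K : Subgroup G}
    (hB : B.index = 2) (hK : K ≠ ⊤) : ((K : Set G) \ B).ncard * 4 ≤ Nat.card G := by
  have hsplit := ncard_inter_add_ncard_sdiff_eq_ncard (K : Set G) B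
  rw [← Nat.card_coe_set_eq (K : Set G), SetLike.coe_sort_coe] at hsplit
  have := ncard_diff_le_ncard_inter_of_index_eq_two hB K
  have := card_mul_two_le_card_of_ne_top hK
  omega

end Subgroup

/-- Let `A` be a finite group, `B` a subgroup of index 2, and `H`, `K` subgroups with
`1 < H ≤ K < A` and `H ≤ B`. The number of subsets `S` of `A \ B` such that `S \ K` is a
union of right `H`-cosets is at most `2 ^ (3|A|/8)`. -/
theorem stmt_7 (A : Type*) [Group A] [Finite A] (B H K : Subgroup A) (hB : B.index = 2)
    (hH : H ≠ ⊥) (hHK : H ≤ K) (hK : K ≠ ⊤) (hHB : H ≤ B) :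
    (Nat.card {S : Set A | S ⊆ (B : Set A)ᶜ ∧
        ∀ s ∈ S \ (K : Set A), ∀ h ∈ H, s * h ∈ S} : ℝ) ≤
      (2 : ℝ) ^ (3 * (Nat.card A : ℝ) / 8) := by
  set X : Set A := (B : Set A)ᶜ
  set c := ((QuotientGroup.mk : A → A ⧸ H) '' (X \ K)).ncard
  have hsat : ∀ s ∈ X \ K, ∀ h ∈ H, s * h ∈ X \ K := fun s hs h hh =>
    ⟨mt (B.mul_mem_cancel_right (hHB hh)).1 hs.1, mt (K.mul_mem_cancel_right (hHK hh)).1 hs.2⟩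
  have hXK : X ∩ K = (K : Set A) \ B := by rw [inter_comm, sdiff_eq]
  have hcount : {S : Set A | S ⊆ X ∧ ∀ s ∈ S \ K, ∀ h ∈ H, s * h ∈ S}.ncard ≤
      2 ^ (((K : Set A) \ B).ncard + c) :=
    hXK ▸ QuotientGroup.ncard_setOf_subset_and_mul_mem_le H X K
  have hsplit : ((K : Set A) \ B).ncard + (X \ K).ncard = Nat.card B := by
    rw [← hXK, ncard_inter_add_ncard_sdiff_eq_ncard,
      Subgroup.ncard_compl_eq_card_of_index_eq_two hB]
  have hcosets : (X \ K).ncard = Nat.card H * c :=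
    QuotientGroup.ncard_eq_card_mul_ncard_image_mk H hsat
  have hc : 2 * c ≤ Nat.card H * c :=
    Nat.mul_le_mul_right c ((Subgroup.one_lt_card_iff_ne_bot H).2 hH)
  have hB2 : Nat.card B * 2 = Nat.card A := hB ▸ B.card_mul_index
  have hK4 := Subgroup.ncard_diff_mul_four_le_card_of_index_eq_two hB hK
  rw [Nat.card_coe_set_eq]
  calc (_ : ℝ) ≤ (2 : ℝ) ^ ((((K : Set A) \ B).ncard + c : ℕ) : ℝ) := by
        rw [Real.rpow_natCast]; exact_mod_cast hcount
    _ ≤ _ := by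
        gcongr
        · norm_num
        · rw [le_div_iff₀ (by norm_num)]; exact_mod_cast (by omega : _ * 8 ≤ 3 * Nat.card A)
end

section
/- Let A be a finite abelian group of even order and B a subgroup of index 2. The number of inverse-closed subsets S of A \ B equals 2^(|A|/4 + |A₂ \ B|/2), where A₂ = {a ∈ A : a² = 1}. -/
/-!
Inversion is an involution of `A \ B` (the coset `A \ B` is closed under inverses), and the
inverse-closed subsets of `A \ B` are exactly the unions of its orbits `{a, a⁻¹}`, so there are
`2 ^ k` of them, `k` the number of orbits. Counting each element once and each fixed point once
more gives weight `2` to every orbit, so `2k = |A \ B| + |A₂ \ B| = |A| / 2 + |A₂ \ B|`.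
-/

open Function

section OrbitPair

variable {α : Type*} {f : α → α}

def orbitPair (f : α → α) (x : α) : Sym2 α := s(x, f x)

theorem orbitPair_eq_orbitPair_iff (hf : Involutive f) {x y : α} :
    orbitPair f y = orbitPair f x ↔ y = x ∨ y = f x := by
  simp only [orbitPair, Sym2.eq_iff]
  constructor
  · rintro (⟨rfl, -⟩ | ⟨rfl, -⟩) <;> simp
  · rintro (rfl | rfl)
    · simp
    · simp [hf x]

theorem orbitPair_apply_self (hf : Involutive f) (x : α) : orbitPair f (f x) = orbitPair f x := by
  rw [orbitPair, hf x, Sym2.eq_swap, orbitPair]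

theorem preimage_image_orbitPair (hf : Involutive f) {S : Set α} (hS : f ⁻¹' S = S) :
    orbitPair f ⁻¹' (orbitPair f '' S) = S := by
  refine Set.Subset.antisymm ?_ (Set.subset_preimage_image _ _)
  rintro y ⟨x, hx, hxy⟩
  rcases (orbitPair_eq_orbitPair_iff hf).1 hxy.symm with rfl | rfl
  · exact hx
  · rwa [← hS] at hx

theorem setOf_invariant_subset_eq_image_powerset (hf : Involutive f) {C : Set α}
    (hC : f ⁻¹' C = C) :
    {S : Set α | S ⊆ C ∧ f ⁻¹' S = S} =
      (fun T => C ∩ orbitPair f ⁻¹' T) '' 𝒫 (orbitPair f '' C) := by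
  ext S
  constructor
  · rintro ⟨hSC, hS⟩
    refine ⟨orbitPair f '' S, Set.image_mono hSC, ?_⟩
    simp only [preimage_image_orbitPair hf hS, Set.inter_eq_right.2 hSC]
  · rintro ⟨T, -, rfl⟩
    refine ⟨Set.inter_subset_left, ?_⟩
    rw [Set.preimage_inter, hC, ← Set.preimage_comp]
    congr 2
    exact funext (orbitPair_apply_self hf)

theorem ncard_setOf_invariant_subset [Finite α] (hf : Involutive f) {C : Set α}
    (hC : f ⁻¹' C = C) :
    {S : Set α | S ⊆ C ∧ f ⁻¹' S = S}.ncard = 2 ^ (orbitPair f '' C).ncard := by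
  rw [setOf_invariant_subset_eq_image_powerset hf hC, Set.InjOn.ncard_image, Set.ncard_powerset]
  refine Set.LeftInvOn.injOn (f₁' := (orbitPair f '' ·)) fun T hT => ?_
  simp only [Set.image_inter_preimage, Set.inter_eq_right.2 hT]

theorem two_mul_card_image_orbitPair [DecidableEq α] (hf : Involutive f) {s : Finset α}
    (hs : ∀ x ∈ s, f x ∈ s) :
    2 * (s.image (orbitPair f)).card = s.card + (s.filter (fun x => f x = x)).card := by
  set w : α → ℕ := fun x => 1 + if f x = x then 1 else 0
  have hfiber : ∀ x ∈ s, ∑ y ∈ s with orbitPair f y = orbitPair f x, w y = 2 := by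
    intro x hx
    by_cases hfx : f x = x
    · have : {y ∈ s | orbitPair f y = orbitPair f x} = {x} := by
        ext y
        simp only [Finset.mem_filter, orbitPair_eq_orbitPair_iff hf, hfx, or_self,
          Finset.mem_singleton, and_iff_right_iff_imp]
        rintro rfl
        exact hx
      simp [this, w, hfx]
    · have : {y ∈ s | orbitPair f y = orbitPair f x} = {x, f x} := by
        ext y
        simp only [Finset.mem_filter, orbitPair_eq_orbitPair_iff hf, Finset.mem_insert,
          Finset.mem_singleton, and_iff_right_iff_imp]
        rintro (rfl | rfl)
        exacts [hx, hs _ hx]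
      rw [this, Finset.sum_pair (Ne.symm hfx)]
      simp [w, hfx, Ne.symm hfx, hf x]
  calc 2 * (s.image (orbitPair f)).card
      = ∑ z ∈ s.image (orbitPair f), ∑ y ∈ s with orbitPair f y = z, w y := by
        rw [mul_comm, ← smul_eq_mul, ← Finset.sum_const]
        refine Finset.sum_congr rfl fun z hz => ?_
        obtain ⟨x, hx, rfl⟩ := Finset.mem_image.1 hz
        exact (hfiber x hx).symm
    _ = ∑ y ∈ s, w y := Finset.sum_fiberwise_of_maps_to (fun y hy => Finset.mem_image_of_mem _ hy) _
    _ = s.card + (s.filter (fun x => f x = x)).card := by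
        simp [w, Finset.sum_add_distrib, Finset.sum_boole]

theorem two_mul_ncard_image_orbitPair [Finite α] (hf : Involutive f) {C : Set α}
    (hC : f ⁻¹' C = C) :
    2 * (orbitPair f '' C).ncard = C.ncard + (C ∩ fixedPoints f).ncard := by
  classical
  have := Fintype.ofFinite α
  obtain ⟨s, rfl⟩ : ∃ s : Finset α, (s : Set α) = C := ⟨C.toFinset, Set.coe_toFinset C⟩
  have hs : ∀ x ∈ s, f x ∈ s := fun x hx => (Set.ext_iff.1 hC x).2 hx
  have hfix : (s : Set α) ∩ fixedPoints f = ↑(s.filter fun x => f x = x) := by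
    ext x; simp [IsFixedPt]
  rw [hfix, ← Finset.coe_image, Set.ncard_coe_finset, Set.ncard_coe_finset, Set.ncard_coe_finset]
  exact two_mul_card_image_orbitPair hf hs

end OrbitPair

theorem ncard_compl_of_index_eq_two {G : Type*} [Group G] [Finite G] {H : Subgroup G}
    (hH : H.index = 2) : 2 * (H : Set G)ᶜ.ncard = Nat.card G := by
  have h1 := Set.ncard_add_ncard_compl (H : Set G)
  have h2 := H.card_mul_index
  rw [hH] at h2
  have h3 : (H : Set G).ncard = Nat.card H := Nat.card_coe_set_eq _ |>.symm
  omega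

theorem stmt_8_general (A : Type*) [CommGroup A] [Finite A] (B : Subgroup A) (hB : B.index = 2) :
    (Nat.card {S : Set A | S ⊆ (B : Set A)ᶜ ∧ S⁻¹ = S} : ℝ) =
      (2 : ℝ) ^ ((Nat.card A : ℝ) / 4 +
        (({a : A | a ^ 2 = 1} \ (B : Set A)).ncard : ℝ) / 2) := by
  have hinv : Involutive (Inv.inv : A → A) := inv_inv
  have hC : Inv.inv ⁻¹' (B : Set A)ᶜ = (B : Set A)ᶜ := by
    rw [Set.inv_preimage, Set.compl_inv, inv_coe_set]
  have hsets : {S : Set A | S ⊆ (B : Set A)ᶜ ∧ S⁻¹ = S} =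
      {S : Set A | S ⊆ (B : Set A)ᶜ ∧ Inv.inv ⁻¹' S = S} := by
    simp only [Set.inv_preimage]
  have hfix : (B : Set A)ᶜ ∩ fixedPoints Inv.inv = {a : A | a ^ 2 = 1} \ (B : Set A) := by
    ext a
    simp [IsFixedPt, inv_eq_iff_mul_eq_one, sq, and_comm]
  have horbits := two_mul_ncard_image_orbitPair hinv hC
  have hcompl := ncard_compl_of_index_eq_two hB
  rw [hfix] at horbits
  have hk : 4 * (orbitPair Inv.inv '' (B : Set A)ᶜ).ncard =
      Nat.card A + 2 * ({a : A | a ^ 2 = 1} \ (B : Set A)).ncard := by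
    omega
  rw [Nat.card_coe_set_eq, hsets, ncard_setOf_invariant_subset hinv hC, Nat.cast_pow,
    Nat.cast_ofNat, ← Real.rpow_natCast]
  congr 1
  have hk' := congrArg (Nat.cast : ℕ → ℝ) hk
  push_cast at hk'
  linarith

/-- Let `A` be a finite abelian group of even order and `B` a subgroup of index 2.
The number of inverse-closed subsets `S` of `A \ B` equals
`2 ^ (|A|/4 + |A₂ \ B|/2)`, where `A₂ = {a ∈ A : a² = 1}`. -/
theorem stmt_8 (A : Type*) [CommGroup A] [Finite A] (B : Subgroup A) (hB : B.index = 2)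
    (heven : Even (Nat.card A)) :
    (Nat.card {S : Set A | S ⊆ (B : Set A)ᶜ ∧ S⁻¹ = S} : ℝ) =
      (2 : ℝ) ^ ((Nat.card A : ℝ) / 4 +
        (({a : A | a ^ 2 = 1} \ (B : Set A)).ncard : ℝ) / 2) :=
  stmt_8_general A B hB
end

section
/- Let A = ⟨x⟩ × ⟨y₁⟩ × ⋯ × ⟨y_ℓ⟩ with x of order 4 and each yᵢ of order 2 (ℓ ≥ 1), and let B = ⟨x², y₁, …, y_ℓ⟩. Then there exists a non-identity automorphism α of A, distinct from inversion, such that every element a of A \ B satisfies a^α = a or a^α = a⁻¹. -/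
/-!
Write `A = ℤ/4 × V` with `V = (ℤ/2)^ℓ`. For any homomorphism `δ : V → ℤ/4`, the shear
`(c, v) ↦ (δ v - c, v)` is an involutive automorphism of `A`. Take `δ v = 2 v₁`. An element
`a = (c, v)` outside `B` has `c` odd, so `2c = 2`; since `δ v ∈ {0, 2}` and `-v = v`, the shear
fixes `a` when `v₁ = 1` and inverts it when `v₁ = 0`. It moves `(1, 0)` to `(-1, 0)` and maps
`(0, e₁)` to `(2, e₁) ≠ -(0, e₁)`.
-/

namespace AddEquiv

variable {G H : Type*} [AddCommGroup G] [AddCommGroup H]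

@[simps! apply]
def negShear (δ : H →+ G) : G × H ≃+ G × H where
  toFun a := (δ a.2 - a.1, a.2)
  invFun a := (δ a.2 - a.1, a.2)
  left_inv a := by simp
  right_inv a := by simp
  map_add' a b := by
    simp only [Prod.fst_add, Prod.snd_add, map_add, Prod.mk_add_mk]
    abel_nf

theorem negShear_apply_eq_self_iff (δ : H →+ G) (a : G × H) :
    negShear δ a = a ↔ δ a.2 = a.1 + a.1 := by
  simp [Prod.ext_iff, sub_eq_iff_eq_add]

theorem negShear_apply_eq_neg_iff (δ : H →+ G) (a : G × H) :
    negShear δ a = -a ↔ δ a.2 = 0 ∧ a.2 = -a.2 := by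
  simp [Prod.ext_iff]

end AddEquiv

namespace ZMod

def doubleHom : ZMod 2 →+ ZMod 4 :=
  ZMod.lift 2 ⟨zmultiplesHom _ 2, by decide⟩

theorem doubleHom_one : doubleHom 1 = 2 := by
  simpa [doubleHom] using ZMod.lift_coe 2 ⟨zmultiplesHom (ZMod 4) 2, by decide⟩ 1

theorem doubleHom_eq_zero_or_eq_two (t : ZMod 2) : doubleHom t = 0 ∨ doubleHom t = 2 := by
  fin_cases t
  · exact .inl (map_zero _)
  · exact .inr doubleHom_one

theorem add_self_eq_zero_or_eq_two (c : ZMod 4) : c + c = 0 ∨ c + c = 2 := by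
  revert c; decide

theorem eq_zero_or_eq_two_of_add_self_eq_zero {c : ZMod 4} (h : c + c = 0) : c = 0 ∨ c = 2 := by
  revert c; decide

end ZMod

theorem mem_closure_two_zero_union_fst_eq_zero {H : Type*} [AddCommGroup H] {a : ZMod 4 × H}
    (ha : a.1 + a.1 = 0) :
    a ∈ AddSubgroup.closure ({((2 : ZMod 4), (0 : H))} ∪ {a | a.1 = 0}) := by
  rcases ZMod.eq_zero_or_eq_two_of_add_self_eq_zero ha with h0 | h2
  · exact AddSubgroup.subset_closure (.inr h0)
  · have : a = (2, 0) + (0, a.2) := by ext <;> simp [h2]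
    rw [this]
    exact add_mem (AddSubgroup.subset_closure (.inl rfl)) (AddSubgroup.subset_closure (.inr rfl))

/-- Let `A = ⟨x⟩ × ⟨y₁⟩ × ⋯ × ⟨y_ℓ⟩` with `x` of order 4 and each `yᵢ` of order 2
(`ℓ ≥ 1`), and let `B = ⟨x², y₁, …, y_ℓ⟩`. Then there exists a non-identity automorphism
`α` of `A`, distinct from inversion, such that every `a ∈ A \ B` satisfies
`a^α = a` or `a^α = a⁻¹` (written additively). -/
theorem stmt_10 (ℓ : ℕ) (hℓ : 1 ≤ ℓ)
    (B : AddSubgroup (ZMod 4 × (Fin ℓ → ZMod 2)))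
    (hB : B = AddSubgroup.closure
      ({((2 : ZMod 4), (0 : Fin ℓ → ZMod 2))} ∪ {a | a.1 = 0})) :
    ∃ α : (ZMod 4 × (Fin ℓ → ZMod 2)) ≃+ (ZMod 4 × (Fin ℓ → ZMod 2)),
      (∃ a, α a ≠ a) ∧ (∃ a, α a ≠ -a) ∧
      ∀ a, a ∉ B → (α a = a ∨ α a = -a) := by
  let i : Fin ℓ := ⟨0, hℓ⟩
  let δ := ZMod.doubleHom.comp (Pi.evalAddMonoidHom (fun _ => ZMod 2) i)
  refine ⟨AddEquiv.negShear δ, ⟨(1, 0), ?_⟩, ⟨(0, Pi.single i 1), ?_⟩, fun a ha => ?_⟩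
  · rw [Ne, AddEquiv.negShear_apply_eq_self_iff]
    simp only [map_zero]
    decide
  · rw [Ne, AddEquiv.negShear_apply_eq_neg_iff, not_and_or]
    left
    simp only [δ, AddMonoidHom.comp_apply, Pi.evalAddMonoidHom_apply, Pi.single_eq_same,
      ZMod.doubleHom_one]
    decide
  · subst hB
    have h2 : a.1 + a.1 = 2 := (ZMod.add_self_eq_zero_or_eq_two a.1).resolve_left
      fun h => ha (mem_closure_two_zero_union_fst_eq_zero h)
    have hneg : a.2 = -a.2 := funext fun j => (ZMod.neg_eq_self_mod_two (a.2 j)).symm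
    rcases ZMod.doubleHom_eq_zero_or_eq_two (a.2 i) with h | h
    · exact .inr ((AddEquiv.negShear_apply_eq_neg_iff δ a).2 ⟨h, hneg⟩)
    · exact .inl ((AddEquiv.negShear_apply_eq_self_iff δ a).2 (h.trans h2.symm))
end

section
/- Let A = ⟨x₁⟩ × ⟨x₂⟩ × ⟨y₁⟩ × ⋯ × ⟨y_ℓ⟩ with x₁, x₂ of order 4 and each yᵢ of order 2 (ℓ ≥ 0), and let B = ⟨x₁², x₂, y₁, …, y_ℓ⟩. Then there exists a non-identity automorphism α of A, distinct from inversion, such that every element a of A \ B satisfies a^α = a or a^α = a⁻¹. -/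
/-!
With `A = ZMod 4 × ZMod 4 × M` written additively, take `α (a, b, y) = (a + 2b, -b, y)`, the
involutive automorphism `x₂ ↦ x₁² x₂⁻¹`. An element outside `B` has odd first coordinate `a`.
If `b` is even then `-b = b` and `2b = 0`, so `α` fixes the element; if `b` is odd then
`2b = 2 = 2a`, so `a + 2b = -a`, and since `M` has exponent 2 the element is inverted.
-/

namespace ZMod

lemma two_mul_eq_zero_or_two (t : ZMod 4) : 2 * t = 0 ∨ 2 * t = 2 := by
  revert t; decide

lemma eq_zero_or_two_of_two_mul_eq_zero {t : ZMod 4} (ht : 2 * t = 0) : t = 0 ∨ t = 2 := by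
  revert t; decide

lemma neg_eq_self_of_two_mul_eq_zero {t : ZMod 4} (ht : 2 * t = 0) : -t = t := by
  revert t; decide

lemma add_two_eq_neg_of_two_mul_eq_two {t : ZMod 4} (ht : 2 * t = 2) : t + 2 = -t := by
  revert t; decide

end ZMod

section Shear

variable (M : Type*) [AddCommGroup M]

def shearNeg : ZMod 4 × ZMod 4 × M ≃+ ZMod 4 × ZMod 4 × M where
  toFun x := (x.1 + 2 * x.2.1, -x.2.1, x.2.2)
  invFun x := (x.1 + 2 * x.2.1, -x.2.1, x.2.2)
  left_inv x := Prod.ext (by simp) (Prod.ext (neg_neg _) rfl)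
  right_inv x := Prod.ext (by simp) (Prod.ext (neg_neg _) rfl)
  map_add' x y := Prod.ext (by simp; ring) (Prod.ext (neg_add _ _) rfl)

variable {M}

@[simp]
lemma shearNeg_apply (x : ZMod 4 × ZMod 4 × M) :
    shearNeg M x = (x.1 + 2 * x.2.1, -x.2.1, x.2.2) := rfl

lemma shearNeg_ne_id : shearNeg M (0, 1, 0) ≠ (0, 1, 0) := by
  intro h
  have h2 : (2 : ZMod 4) = 0 := by simpa using congrArg Prod.fst h
  exact absurd h2 (by decide)

lemma shearNeg_ne_neg : shearNeg M (1, 0, 0) ≠ -(1, 0, 0) := by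
  intro h
  have h1 : (1 : ZMod 4) = -1 := by simpa using congrArg Prod.fst h
  exact absurd h1 (by decide)

lemma shearNeg_eq_self_or_neg {x : ZMod 4 × ZMod 4 × M} (hx : 2 * x.1 = 2)
    (hy : -x.2.2 = x.2.2) : shearNeg M x = x ∨ shearNeg M x = -x := by
  obtain ⟨a, b, y⟩ := x
  rcases ZMod.two_mul_eq_zero_or_two b with hb | hb
  · left
    simp [hb, ZMod.neg_eq_self_of_two_mul_eq_zero hb]
  · right
    simp only at hx hy
    simp [hb, ZMod.add_two_eq_neg_of_two_mul_eq_two hx, hy]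

lemma mem_closure_of_two_mul_fst_eq_zero {x : ZMod 4 × ZMod 4 × M} (hx : 2 * x.1 = 0) :
    x ∈ AddSubgroup.closure ({((2 : ZMod 4), (0 : ZMod 4), (0 : M))} ∪ {a | a.1 = 0}) := by
  rcases ZMod.eq_zero_or_two_of_two_mul_eq_zero hx with h0 | h2
  · exact AddSubgroup.subset_closure (Or.inr h0)
  · have hsplit : x = (2, 0, 0) + (0, x.2.1, x.2.2) := Prod.ext (by simp [h2]) (by simp)
    rw [hsplit]
    exact add_mem (AddSubgroup.subset_closure (Or.inl rfl))
      (AddSubgroup.subset_closure (Or.inr rfl))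

end Shear

/-- Let `A = ⟨x₁⟩ × ⟨x₂⟩ × ⟨y₁⟩ × ⋯ × ⟨y_ℓ⟩` with `x₁, x₂` of order 4 and each `yᵢ` of
order 2 (`ℓ ≥ 0`), and let `B = ⟨x₁², x₂, y₁, …, y_ℓ⟩`. Then there exists a non-identity
automorphism `α` of `A`, distinct from inversion, such that every `a ∈ A \ B` satisfies
`a^α = a` or `a^α = a⁻¹` (written additively). -/
theorem stmt_11 (ℓ : ℕ)
    (B : AddSubgroup (ZMod 4 × ZMod 4 × (Fin ℓ → ZMod 2)))
    (hB : B = AddSubgroup.closure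
      ({((2 : ZMod 4), (0 : ZMod 4), (0 : Fin ℓ → ZMod 2))} ∪ {a | a.1 = 0})) :
    ∃ α : (ZMod 4 × ZMod 4 × (Fin ℓ → ZMod 2)) ≃+ (ZMod 4 × ZMod 4 × (Fin ℓ → ZMod 2)),
      (∃ a, α a ≠ a) ∧ (∃ a, α a ≠ -a) ∧
      ∀ a, a ∉ B → (α a = a ∨ α a = -a) := by
  refine ⟨shearNeg _, ⟨_, shearNeg_ne_id⟩, ⟨_, shearNeg_ne_neg⟩, fun a ha => ?_⟩
  have hodd : 2 * a.1 = 2 := (ZMod.two_mul_eq_zero_or_two a.1).resolve_left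
    fun h => ha (hB ▸ mem_closure_of_two_mul_fst_eq_zero h)
  exact shearNeg_eq_self_or_neg hodd (funext fun i => ZModModule.neg_eq_self (a.2.2 i))
end
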